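/- arXiv:1812.04168 — 6 statements merged into one kernel-verified Lean document; each statement's English description precedes it below -/
import Mathlib

section
/- Let T ≥ 1 be an integer reset period. Suppose there exist a symmetric matrix P ∈ ℝ^{(n_x+n_c)×(n_x+n_c)} and scalars ε ∈ (0,1), μ ∈ [−1,0), δ ∈ [1,∞), ϵ > 0 such that P ≻ ϵ·I, Fᵀ·P·F ⪯ (1+μ)·P, Fᵀ·H·P·H·F ⪯ δ·P, and δ·(1+μ)^{T−1} < ε. Then every reset closed-loop trajectory converges to the origin: for every initial condition z[0] ∈ ℝ^{n_x+n_c}, lim_{k→∞} z[k] = 0 (the closed loop is globally asymptotically stable). -/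
open Matrix Filter

/-- Closed-loop matrix F = [[A + B·D_c·C, B·C_c],[B_c·C, A_c]]. -/
def Fcl {nx nc nu ny : ℕ} (A : Matrix (Fin nx) (Fin nx) ℝ) (B : Matrix (Fin nx) (Fin nu) ℝ)
    (C : Matrix (Fin ny) (Fin nx) ℝ) (Ac : Matrix (Fin nc) (Fin nc) ℝ)
    (Bc : Matrix (Fin nc) (Fin ny) ℝ) (Cc : Matrix (Fin nu) (Fin nc) ℝ)
    (Dc : Matrix (Fin nu) (Fin ny) ℝ) :
    Matrix (Fin nx ⊕ Fin nc) (Fin nx ⊕ Fin nc) ℝ :=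
  Matrix.fromBlocks (A + B * Dc * C) (B * Cc) (Bc * C) Ac

/-- Reset projection H = [[I,0],[0,0]]. -/
def Hmat (nx nc : ℕ) : Matrix (Fin nx ⊕ Fin nc) (Fin nx ⊕ Fin nc) ℝ :=
  Matrix.fromBlocks 1 0 0 0

/-!
The quadratic form `V z = zᵀ P z` is a Lyapunov function sampled once per period: within a period
the flow steps contract `V` by `1 + μ ≤ 1`, and the reset step enlarges it by at most `δ`, so over
a whole period `V` shrinks by `δ (1 + μ)^(T - 1) < ε < 1`. Hence `V (z k) ≤ ρ^(k / T) V (z 0)` with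
`ρ < 1`, and `P ⪰ ϵ I` turns `V (z k) → 0` into `z k → 0`.
-/

section QuadraticForm

variable {n : Type*} [Fintype n]

theorem Matrix.dotProduct_mulVec_conj (P M : Matrix n n ℝ) (x : n → ℝ) :
    x ⬝ᵥ (Mᵀ * P * M) *ᵥ x = (M *ᵥ x) ⬝ᵥ P *ᵥ (M *ᵥ x) := by
  rw [← mulVec_mulVec, ← mulVec_mulVec, dotProduct_mulVec, vecMul_transpose]

theorem Matrix.PosSemidef.dotProduct_mulVec_conj_le {P M : Matrix n n ℝ} {c : ℝ}
    (h : (c • P - Mᵀ * P * M).PosSemidef) (x : n → ℝ) :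
    (M *ᵥ x) ⬝ᵥ P *ᵥ (M *ᵥ x) ≤ c * (x ⬝ᵥ P *ᵥ x) := by
  have := h.dotProduct_mulVec_nonneg x
  simp only [star_trivial, sub_mulVec, dotProduct_sub, smul_mulVec, dotProduct_smul,
    smul_eq_mul, dotProduct_mulVec_conj] at this
  linarith

variable [DecidableEq n]

theorem Matrix.PosSemidef.mul_dotProduct_self_le {P : Matrix n n ℝ} {ϵ : ℝ}
    (h : (P - ϵ • 1).PosSemidef) (x : n → ℝ) :
    ϵ * (x ⬝ᵥ x) ≤ x ⬝ᵥ P *ᵥ x := by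
  have := h.dotProduct_mulVec_nonneg x
  simp only [star_trivial, sub_mulVec, dotProduct_sub, smul_mulVec, one_mulVec,
    dotProduct_smul, smul_eq_mul] at this
  linarith

end QuadraticForm

theorem norm_le_sqrt_dotProduct_self {n : Type*} [Fintype n] (x : n → ℝ) :
    ‖x‖ ≤ √(x ⬝ᵥ x) := by
  refine (pi_norm_le_iff_of_nonneg (Real.sqrt_nonneg _)).mpr fun i => ?_
  rw [Real.norm_eq_abs]
  refine Real.abs_le_sqrt ?_
  simpa [dotProduct, pow_two] using Finset.single_le_sum
    (f := fun j => x j * x j) (fun j _ => mul_self_nonneg _) (Finset.mem_univ i)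

theorem tendsto_zero_of_quadForm_tendsto_zero {n : Type*} [Fintype n] [DecidableEq n]
    {P : Matrix n n ℝ} {ϵ : ℝ} (hϵ : 0 < ϵ) (hP : (P - ϵ • 1).PosSemidef)
    {z : ℕ → n → ℝ} (hV : Tendsto (fun k => z k ⬝ᵥ P *ᵥ z k) atTop (nhds 0)) :
    Tendsto z atTop (nhds 0) := by
  have hbound : Tendsto (fun k => √(z k ⬝ᵥ P *ᵥ z k / ϵ)) atTop (nhds 0) := by
    simpa using (hV.div_const ϵ).sqrt
  refine squeeze_zero_norm (fun k => ?_) hbound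
  refine (norm_le_sqrt_dotProduct_self (z k)).trans (Real.sqrt_le_sqrt ?_)
  rw [le_div_iff₀ hϵ, mul_comm]
  exact hP.mul_dotProduct_self_le (z k)

theorem tendsto_zero_of_periodic_decay {v : ℕ → ℝ} {T : ℕ} {a b : ℝ} (hT : 1 ≤ T)
    (hv : ∀ k, 0 ≤ v k) (ha₀ : 0 ≤ a) (ha₁ : a ≤ 1) (hb : 0 ≤ b) (hρ : b * a ^ (T - 1) < 1)
    (hflow : ∀ k, (k + 1) % T ≠ 0 → v (k + 1) ≤ a * v k)
    (hreset : ∀ k, (k + 1) % T = 0 → v (k + 1) ≤ b * v k) :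
    Tendsto v atTop (nhds 0) := by
  set ρ := b * a ^ (T - 1)
  have hρ₀ : 0 ≤ ρ := mul_nonneg hb (pow_nonneg ha₀ _)
  have key : ∀ k, v k ≤ ρ ^ (k / T) * a ^ (k % T) * v 0 := by
    intro k
    induction k with
    | zero => simp
    | succ k ih =>
      have hdk := Nat.div_add_mod k T
      have hdk' := Nat.div_add_mod (k + 1) T
      have hmod := Nat.mod_lt k (by omega : 0 < T)
      by_cases hdvd : T ∣ k + 1
      · have hdiv : (k + 1) / T = k / T + 1 := Nat.succ_div_of_dvd hdvd
        have hk : k % T = T - 1 := by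
          rw [hdiv, Nat.mul_add] at hdk'
          omega
        have hk' : (k + 1) % T = 0 := Nat.mod_eq_zero_of_dvd hdvd
        calc v (k + 1) ≤ b * v k := hreset k hk'
          _ ≤ b * (ρ ^ (k / T) * a ^ (k % T) * v 0) := mul_le_mul_of_nonneg_left ih hb
          _ = ρ ^ ((k + 1) / T) * a ^ ((k + 1) % T) * v 0 := by
            rw [hdiv, hk, hk']; ring
      · have hdiv : (k + 1) / T = k / T := Nat.succ_div_of_not_dvd hdvd
        have hk : (k + 1) % T = k % T + 1 := by
          rw [hdiv] at hdk'
          omega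
        calc v (k + 1) ≤ a * v k := hflow k (by rwa [Ne, ← Nat.dvd_iff_mod_eq_zero])
          _ ≤ a * (ρ ^ (k / T) * a ^ (k % T) * v 0) := mul_le_mul_of_nonneg_left ih ha₀
          _ = ρ ^ ((k + 1) / T) * a ^ ((k + 1) % T) * v 0 := by
            rw [hdiv, hk]; ring
  have hdiv : Tendsto (fun k => k / T) atTop atTop :=
    Nat.tendsto_div_const_atTop (by omega)
  have hgeom : Tendsto (fun k => ρ ^ (k / T) * v 0) atTop (nhds 0) := by
    simpa using ((tendsto_pow_atTop_nhds_zero_of_lt_one hρ₀ hρ).comp hdiv).mul_const (v 0)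
  refine squeeze_zero hv (fun k => (key k).trans ?_) hgeom
  gcongr
  · exact hv 0
  · exact mul_le_of_le_one_right (pow_nonneg hρ₀ _) (pow_le_one₀ ha₀ ha₁)

theorem Hmat_transpose (nx nc : ℕ) : (Hmat nx nc)ᵀ = Hmat nx nc := by
  simp [Hmat, fromBlocks_transpose]

theorem stmt0_general {nx nc nu ny : ℕ} (T : ℕ) (hT : 1 ≤ T)
    (A : Matrix (Fin nx) (Fin nx) ℝ) (B : Matrix (Fin nx) (Fin nu) ℝ)
    (C : Matrix (Fin ny) (Fin nx) ℝ)
    (Ac : Matrix (Fin nc) (Fin nc) ℝ) (Bc : Matrix (Fin nc) (Fin ny) ℝ)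
    (Cc : Matrix (Fin nu) (Fin nc) ℝ) (Dc : Matrix (Fin nu) (Fin ny) ℝ)
    (P : Matrix (Fin nx ⊕ Fin nc) (Fin nx ⊕ Fin nc) ℝ)
    (ε μ δ ϵ : ℝ)
    (hε : ε ∈ Set.Ioo (0 : ℝ) 1) (hμ : μ ∈ Set.Ico (-1 : ℝ) 0)
    (hδ : δ ∈ Set.Ici (1 : ℝ)) (hϵ : 0 < ϵ)
    (h1 : (P - ϵ • 1).PosDef)
    (h2 : ((1 + μ) • P - (Fcl A B C Ac Bc Cc Dc)ᵀ * P * Fcl A B C Ac Bc Cc Dc).PosSemidef)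
    (h3 : (δ • P - (Fcl A B C Ac Bc Cc Dc)ᵀ * Hmat nx nc * P * Hmat nx nc *
      Fcl A B C Ac Bc Cc Dc).PosSemidef)
    (h4 : δ * (1 + μ) ^ (T - 1) < ε)
    (z : ℕ → Fin nx ⊕ Fin nc → ℝ)
    (hz : ∀ k : ℕ,
      z (k + 1) = if (k + 1) % T ≠ 0
        then (Fcl A B C Ac Bc Cc Dc).mulVec (z k)
        else (Hmat nx nc * Fcl A B C Ac Bc Cc Dc).mulVec (z k)) :
    Tendsto z atTop (nhds 0) := by
  set F := Fcl A B C Ac Bc Cc Dc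
  set H := Hmat nx nc
  have hreset : (δ • P - (H * F)ᵀ * P * (H * F)).PosSemidef := by
    rw [transpose_mul, show Hᵀ = H from Hmat_transpose nx nc]
    simpa only [Matrix.mul_assoc] using h3
  have hPϵ := h1.posSemidef
  refine tendsto_zero_of_quadForm_tendsto_zero hϵ hPϵ <|
    tendsto_zero_of_periodic_decay hT (a := 1 + μ) (b := δ)
      (fun k => (mul_nonneg hϵ.le (dotProduct_self_star_nonneg (z k))).trans
        (hPϵ.mul_dotProduct_self_le (z k)))
      (by linarith [hμ.1]) (by linarith [hμ.2]) (by linarith [hδ.out])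
      (by linarith [hε.2]) (fun k hk => ?_) (fun k hk => ?_)
  · rw [hz k, if_pos hk]
    exact h2.dotProduct_mulVec_conj_le _
  · rw [hz k, if_neg (not_not.mpr hk)]
    exact hreset.dotProduct_mulVec_conj_le _

theorem stmt0 {nx nc nu ny : ℕ} (T : ℕ) (hT : 1 ≤ T)
    (A : Matrix (Fin nx) (Fin nx) ℝ) (B : Matrix (Fin nx) (Fin nu) ℝ)
    (C : Matrix (Fin ny) (Fin nx) ℝ)
    (Ac : Matrix (Fin nc) (Fin nc) ℝ) (Bc : Matrix (Fin nc) (Fin ny) ℝ)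
    (Cc : Matrix (Fin nu) (Fin nc) ℝ) (Dc : Matrix (Fin nu) (Fin ny) ℝ)
    (P : Matrix (Fin nx ⊕ Fin nc) (Fin nx ⊕ Fin nc) ℝ) (hP : P.IsSymm)
    (ε μ δ ϵ : ℝ)
    (hε : ε ∈ Set.Ioo (0 : ℝ) 1) (hμ : μ ∈ Set.Ico (-1 : ℝ) 0)
    (hδ : δ ∈ Set.Ici (1 : ℝ)) (hϵ : 0 < ϵ)
    (h1 : (P - ϵ • 1).PosDef)
    (h2 : ((1 + μ) • P - (Fcl A B C Ac Bc Cc Dc)ᵀ * P * Fcl A B C Ac Bc Cc Dc).PosSemidef)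
    (h3 : (δ • P - (Fcl A B C Ac Bc Cc Dc)ᵀ * Hmat nx nc * P * Hmat nx nc *
      Fcl A B C Ac Bc Cc Dc).PosSemidef)
    (h4 : δ * (1 + μ) ^ (T - 1) < ε)
    (z : ℕ → Fin nx ⊕ Fin nc → ℝ)
    (hz : ∀ k : ℕ,
      z (k + 1) = if (k + 1) % T ≠ 0
        then (Fcl A B C Ac Bc Cc Dc).mulVec (z k)
        else (Hmat nx nc * Fcl A B C Ac Bc Cc Dc).mulVec (z k)) :
    Tendsto z atTop (nhds 0) :=
  stmt0_general T hT A B C Ac Bc Cc Dc P ε μ δ ϵ hε hμ hδ hϵ h1 h2 h3 h4 z hz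
end

section
/- Let T ≥ 1 be an integer reset period, let P ∈ ℝ^{(n_x+n_c)×(n_x+n_c)} be symmetric positive semidefinite, μ ∈ [−1,0), δ ∈ [1,∞), and suppose Fᵀ·P·F ⪯ (1+μ)·P and Fᵀ·H·P·H·F ⪯ δ·P. Define V(z) := zᵀ·P·z. Then every reset closed-loop trajectory z satisfies, for all ℓ ∈ ℕ: (i) V(z[ℓT + i]) ≤ (1+μ)^i · V(z[ℓT]) for every i ∈ {0, …, T−1}, and (ii) V(z[(ℓ+1)T]) ≤ δ·(1+μ)^{T−1} · V(z[ℓT]). -/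
open Matrix Filter

/-!
Both bounds are one-step estimates iterated along a period. The matrix inequality
`Mᵀ P M ⪯ c P` says exactly that `V (M v) ≤ c V v` for the quadratic form `V v = vᵀ P v`.
Inside a period every step is a flow step `z ↦ F z`, contracting `V` by the factor `1 + μ`;
the last step of a period is the reset `z ↦ H F z`, expanding `V` by at most `δ`,
since `(H F)ᵀ P (H F) = Fᵀ H P H F` for the symmetric `H`.
-/

theorem Matrix.dotProduct_mulVec_mulVec_le_of_posSemidef_sub {n : Type*} [Fintype n]
    {P M : Matrix n n ℝ} {c : ℝ} (h : (c • P - Mᵀ * P * M).PosSemidef) (v : n → ℝ) :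
    M *ᵥ v ⬝ᵥ P *ᵥ (M *ᵥ v) ≤ c * (v ⬝ᵥ P *ᵥ v) := by
  have hv := h.dotProduct_mulVec_nonneg v
  have hM : v ⬝ᵥ (Mᵀ * P * M) *ᵥ v = M *ᵥ v ⬝ᵥ P *ᵥ (M *ᵥ v) := by
    rw [← mulVec_mulVec, ← mulVec_mulVec, dotProduct_mulVec, vecMul_transpose]
  simp only [star_trivial, sub_mulVec, dotProduct_sub, smul_mulVec, dotProduct_smul,
    smul_eq_mul, sub_nonneg, hM] at hv
  exact hv

section ResetTrajectory

variable {n : Type*} [Fintype n] {P F G : Matrix n n ℝ} {T : ℕ} {z : ℕ → n → ℝ}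

theorem resetTrajectory_quadForm_le_pow {c : ℝ} (hc : 0 ≤ c)
    (hF : (c • P - Fᵀ * P * F).PosSemidef)
    (hz : ∀ k, z (k + 1) = if (k + 1) % T ≠ 0 then F *ᵥ z k else G *ᵥ z k)
    (ℓ : ℕ) {i : ℕ} (hi : i < T) :
    z (ℓ * T + i) ⬝ᵥ P *ᵥ z (ℓ * T + i) ≤ c ^ i * (z (ℓ * T) ⬝ᵥ P *ᵥ z (ℓ * T)) := by
  induction i with
  | zero => simp
  | succ i ih =>
    have hflow : z (ℓ * T + i + 1) = F *ᵥ z (ℓ * T + i) := by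
      have hmod : (ℓ * T + i + 1) % T = i + 1 := by
        rw [add_assoc, Nat.mul_add_mod_self_right, Nat.mod_eq_of_lt hi]
      rw [hz, if_pos (by omega)]
    calc z (ℓ * T + (i + 1)) ⬝ᵥ P *ᵥ z (ℓ * T + (i + 1))
        ≤ c * (z (ℓ * T + i) ⬝ᵥ P *ᵥ z (ℓ * T + i)) := by
          rw [← add_assoc, hflow]
          exact dotProduct_mulVec_mulVec_le_of_posSemidef_sub hF _
      _ ≤ c * (c ^ i * (z (ℓ * T) ⬝ᵥ P *ᵥ z (ℓ * T))) := by gcongr; exact ih (by omega)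
      _ = c ^ (i + 1) * (z (ℓ * T) ⬝ᵥ P *ᵥ z (ℓ * T)) := by ring

theorem resetTrajectory_quadForm_le_at_reset {c d : ℝ} (hc : 0 ≤ c) (hd : 0 ≤ d)
    (hF : (c • P - Fᵀ * P * F).PosSemidef) (hG : (d • P - Gᵀ * P * G).PosSemidef)
    (hz : ∀ k, z (k + 1) = if (k + 1) % T ≠ 0 then F *ᵥ z k else G *ᵥ z k)
    (hT : 0 < T) (ℓ : ℕ) :
    z ((ℓ + 1) * T) ⬝ᵥ P *ᵥ z ((ℓ + 1) * T) ≤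
      d * c ^ (T - 1) * (z (ℓ * T) ⬝ᵥ P *ᵥ z (ℓ * T)) := by
  have hlast : (ℓ + 1) * T = ℓ * T + (T - 1) + 1 := by
    rw [add_mul, one_mul]; omega
  have hreset : z ((ℓ + 1) * T) = G *ᵥ z (ℓ * T + (T - 1)) := by
    rw [hlast, hz, if_neg (by rw [← hlast, Nat.mul_mod_left]; simp)]
  calc z ((ℓ + 1) * T) ⬝ᵥ P *ᵥ z ((ℓ + 1) * T)
      ≤ d * (z (ℓ * T + (T - 1)) ⬝ᵥ P *ᵥ z (ℓ * T + (T - 1))) := by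
        rw [hreset]
        exact dotProduct_mulVec_mulVec_le_of_posSemidef_sub hG _
    _ ≤ d * (c ^ (T - 1) * (z (ℓ * T) ⬝ᵥ P *ᵥ z (ℓ * T))) := by
        gcongr
        exact resetTrajectory_quadForm_le_pow hc hF hz ℓ (by omega)
    _ = d * c ^ (T - 1) * (z (ℓ * T) ⬝ᵥ P *ᵥ z (ℓ * T)) := by ring

end ResetTrajectory

theorem transpose_Hmat_mul_mul_Hmat_mul {nx nc : ℕ}
    (F P : Matrix (Fin nx ⊕ Fin nc) (Fin nx ⊕ Fin nc) ℝ) :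
    (Hmat nx nc * F)ᵀ * P * (Hmat nx nc * F) = Fᵀ * Hmat nx nc * P * Hmat nx nc * F := by
  simp only [transpose_mul, Hmat_transpose, Matrix.mul_assoc]

theorem stmt1_general {nx nc nu ny : ℕ} (T : ℕ) (hT : 1 ≤ T)
    (A : Matrix (Fin nx) (Fin nx) ℝ) (B : Matrix (Fin nx) (Fin nu) ℝ)
    (C : Matrix (Fin ny) (Fin nx) ℝ)
    (Ac : Matrix (Fin nc) (Fin nc) ℝ) (Bc : Matrix (Fin nc) (Fin ny) ℝ)
    (Cc : Matrix (Fin nu) (Fin nc) ℝ) (Dc : Matrix (Fin nu) (Fin ny) ℝ)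
    (P : Matrix (Fin nx ⊕ Fin nc) (Fin nx ⊕ Fin nc) ℝ)
    (μ δ : ℝ) (hμ : μ ∈ Set.Ico (-1 : ℝ) 0) (hδ : δ ∈ Set.Ici (1 : ℝ))
    (h2 : ((1 + μ) • P - (Fcl A B C Ac Bc Cc Dc)ᵀ * P * Fcl A B C Ac Bc Cc Dc).PosSemidef)
    (h3 : (δ • P - (Fcl A B C Ac Bc Cc Dc)ᵀ * Hmat nx nc * P * Hmat nx nc *
      Fcl A B C Ac Bc Cc Dc).PosSemidef)
    (z : ℕ → Fin nx ⊕ Fin nc → ℝ)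
    (hz : ∀ k : ℕ,
      z (k + 1) = if (k + 1) % T ≠ 0
        then (Fcl A B C Ac Bc Cc Dc).mulVec (z k)
        else (Hmat nx nc * Fcl A B C Ac Bc Cc Dc).mulVec (z k)) :
    ∀ ℓ : ℕ,
      (∀ i : ℕ, i < T →
        z (ℓ * T + i) ⬝ᵥ P.mulVec (z (ℓ * T + i)) ≤
          (1 + μ) ^ i * (z (ℓ * T) ⬝ᵥ P.mulVec (z (ℓ * T)))) ∧
      z ((ℓ + 1) * T) ⬝ᵥ P.mulVec (z ((ℓ + 1) * T)) ≤
        δ * (1 + μ) ^ (T - 1) * (z (ℓ * T) ⬝ᵥ P.mulVec (z (ℓ * T))) := by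
  have hc : 0 ≤ 1 + μ := by linarith [hμ.1]
  have hd : 0 ≤ δ := zero_le_one.trans hδ
  rw [← transpose_Hmat_mul_mul_Hmat_mul] at h3
  exact fun ℓ => ⟨fun _ hi => resetTrajectory_quadForm_le_pow hc h2 hz ℓ hi,
    resetTrajectory_quadForm_le_at_reset hc hd h2 h3 hz hT ℓ⟩

theorem stmt1 {nx nc nu ny : ℕ} (T : ℕ) (hT : 1 ≤ T)
    (A : Matrix (Fin nx) (Fin nx) ℝ) (B : Matrix (Fin nx) (Fin nu) ℝ)
    (C : Matrix (Fin ny) (Fin nx) ℝ)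
    (Ac : Matrix (Fin nc) (Fin nc) ℝ) (Bc : Matrix (Fin nc) (Fin ny) ℝ)
    (Cc : Matrix (Fin nu) (Fin nc) ℝ) (Dc : Matrix (Fin nu) (Fin ny) ℝ)
    (P : Matrix (Fin nx ⊕ Fin nc) (Fin nx ⊕ Fin nc) ℝ) (hP : P.PosSemidef)
    (μ δ : ℝ) (hμ : μ ∈ Set.Ico (-1 : ℝ) 0) (hδ : δ ∈ Set.Ici (1 : ℝ))
    (h2 : ((1 + μ) • P - (Fcl A B C Ac Bc Cc Dc)ᵀ * P * Fcl A B C Ac Bc Cc Dc).PosSemidef)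
    (h3 : (δ • P - (Fcl A B C Ac Bc Cc Dc)ᵀ * Hmat nx nc * P * Hmat nx nc *
      Fcl A B C Ac Bc Cc Dc).PosSemidef)
    (z : ℕ → Fin nx ⊕ Fin nc → ℝ)
    (hz : ∀ k : ℕ,
      z (k + 1) = if (k + 1) % T ≠ 0
        then (Fcl A B C Ac Bc Cc Dc).mulVec (z k)
        else (Hmat nx nc * Fcl A B C Ac Bc Cc Dc).mulVec (z k)) :
    ∀ ℓ : ℕ,
      (∀ i : ℕ, i < T →
        z (ℓ * T + i) ⬝ᵥ P.mulVec (z (ℓ * T + i)) ≤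
          (1 + μ) ^ i * (z (ℓ * T) ⬝ᵥ P.mulVec (z (ℓ * T)))) ∧
      z ((ℓ + 1) * T) ⬝ᵥ P.mulVec (z ((ℓ + 1) * T)) ≤
        δ * (1 + μ) ^ (T - 1) * (z (ℓ * T) ⬝ᵥ P.mulVec (z (ℓ * T))) :=
  stmt1_general T hT A B C Ac Bc Cc Dc P μ δ hμ hδ h2 h3 z hz
end

section
/- Suppose n_c ≥ n_x, the pair (A,B) is stabilizable (there exists K ∈ ℝ^{n_u×n_x} such that every complex eigenvalue of A + B·K has modulus strictly less than 1), and the pair (A,C) is detectable (there exists L ∈ ℝ^{n_x×n_y} such that every complex eigenvalue of A − L·C has modulus strictly less than 1). Then there exist controller matrices A_c ∈ ℝ^{n_c×n_c}, B_c ∈ ℝ^{n_c×n_y}, C_c ∈ ℝ^{n_u×n_c}, D_c ∈ ℝ^{n_u×n_y}, a symmetric matrix P ∈ ℝ^{(n_x+n_c)×(n_x+n_c)}, a scalar μ* ∈ [−1,0), and a scalar ϵ* > 0 such that P ≻ ϵ*·I and Fᵀ·P·F ⪯ (1+μ*)·P, where F is the corresponding closed-loop matrix. -/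
/-!
Use the observer-based controller `x̂⁺ = (A + BK - LC) x̂ + L y`, `u = K x̂`, padded with
`nc - nx` inert states. In the coordinates `(x, x̂ - x)` its closed loop is block upper
triangular with diagonal blocks `A + BK` and `A - LC` (and a zero block for the padding), so all
its eigenvalues lie in the open unit disc.

For such a Schur stable `M` pick `s < 1` above its spectral radius. By Gelfand's formula the
powers of `G = s⁻¹ M` decay geometrically, so `P = ∑ₖ (Gᵏ)ᵀ Gᵏ` converges, `P ⪰ 1` and
`GᵀPG = P - 1`. Hence `MᵀPM = s² (P - 1) ⪯ s² P`, which is the claim with `μ = s² - 1`.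
-/

open Matrix

open Filter Polynomial
open scoped NNReal ENNReal

theorem spectrum.eventually_norm_pow_le_of_spectralRadius_lt {A : Type*} [NormedRing A]
    [NormedAlgebra ℂ A] [CompleteSpace A] {a : A} {r : ℝ≥0} (h : spectralRadius ℂ a < r) :
    ∀ᶠ k : ℕ in atTop, ‖a ^ k‖ ≤ r ^ k := by
  filter_upwards [(pow_nnnorm_pow_one_div_tendsto_nhds_spectralRadius a).eventually_lt_const h,
    eventually_ge_atTop 1] with k hk hk1
  rw [one_div, ENNReal.rpow_inv_lt_iff (by positivity), ENNReal.rpow_natCast] at hk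
  exact_mod_cast hk.le

namespace Matrix

section Blocks

variable {l m m₁ m₂ α : Type*}

theorem reindex_sumCongr_refl_fromBlocks {m' : Type*} (e : m ≃ m') (A : Matrix l l α)
    (B : Matrix l m α) (C : Matrix m l α) (D : Matrix m m α) :
    reindex ((Equiv.refl l).sumCongr e) ((Equiv.refl l).sumCongr e) (fromBlocks A B C D) =
      fromBlocks A (reindex (Equiv.refl l) e B) (reindex e (Equiv.refl l) C) (reindex e e D) := by
  ext (i | i) (j | j) <;> rfl

theorem reindex_sumAssoc_fromBlocks (A : Matrix l l α) (B₁ : Matrix l m₁ α)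
    (B₂ : Matrix l m₂ α) (C₁ : Matrix m₁ l α) (C₂ : Matrix m₂ l α) (D₁₁ : Matrix m₁ m₁ α)
    (D₁₂ : Matrix m₁ m₂ α) (D₂₁ : Matrix m₂ m₁ α) (D₂₂ : Matrix m₂ m₂ α) :
    reindex (Equiv.sumAssoc l m₁ m₂) (Equiv.sumAssoc l m₁ m₂)
        (fromBlocks (fromBlocks A B₁ C₁ D₁₁) (fromRows B₂ D₁₂) (fromCols C₂ D₂₁) D₂₂) =
      fromBlocks A (fromCols B₁ B₂) (fromRows C₁ C₂) (fromBlocks D₁₁ D₁₂ D₂₁ D₂₂) := by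
  ext (i | i | i) (j | j | j) <;> rfl

end Blocks

variable {n m : Type*} [Fintype n] [Fintype m]

theorem posSemidef_of_hasSum {ι : Type*} {f : ι → Matrix n n ℝ} {P : Matrix n n ℝ}
    (hf : ∀ i, (f i).PosSemidef) (hP : HasSum f P) : P.PosSemidef := by
  refine PosSemidef.of_dotProduct_mulVec_nonneg ?_ fun x => ?_
  · exact hP.matrix_conjTranspose.unique (by simpa only [(hf _).isHermitian.eq] using hP)
  · let q : Matrix n n ℝ →+ ℝ :=
      { toFun := fun M => star x ⬝ᵥ M *ᵥ x
        map_zero' := by simp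
        map_add' := fun M N => by simp [add_mulVec, dotProduct_add] }
    have hq : Continuous q := show Continuous fun M : Matrix n n ℝ => star x ⬝ᵥ M *ᵥ x by fun_prop
    exact (hP.map q hq).nonneg fun i => (hf i).dotProduct_mulVec_nonneg x

variable [DecidableEq n] [DecidableEq m]

theorem transpose_mul_mul_eq_sub_one_of_hasSum {R : Type*} [CommRing R] [TopologicalSpace R]
    [IsTopologicalRing R] [T2Space R] {G P : Matrix n n R}
    (hP : HasSum (fun k => (G ^ k)ᵀ * G ^ k) P) : Gᵀ * P * G = P - 1 := by
  have hshift := (hasSum_nat_add_iff' 1).mpr hP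
  simp only [Finset.range_one, Finset.sum_singleton, pow_zero, transpose_one, mul_one] at hshift
  have hterm (k : ℕ) : Gᵀ * ((G ^ k)ᵀ * G ^ k) * G = (G ^ (k + 1))ᵀ * G ^ (k + 1) := by
    rw [pow_succ, transpose_mul, Matrix.mul_assoc, Matrix.mul_assoc, Matrix.mul_assoc]
  exact ((hP.mul_left Gᵀ).mul_right G).unique (by simpa only [hterm] using hshift)

def IsSchurStable (M : Matrix n n ℝ) : Prop :=
  ∀ z ∈ spectrum ℂ (M.map Complex.ofReal), ‖z‖ < 1

theorem isSchurStable_iff_isRoot_charpoly {M : Matrix n n ℝ} :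
    IsSchurStable M ↔ ∀ z : ℂ, (M.charpoly.map Complex.ofRealHom).IsRoot z → ‖z‖ < 1 := by
  simp only [IsSchurStable, mem_spectrum_iff_isRoot_charpoly, ← charpoly_map]
  rfl

theorem isSchurStable_zero : IsSchurStable (0 : Matrix n n ℝ) := by
  rw [isSchurStable_iff_isRoot_charpoly]
  intro z hz
  rw [charpoly_zero, Polynomial.map_pow, Polynomial.map_X, IsRoot, eval_pow, eval_X] at hz
  simp [eq_zero_of_pow_eq_zero hz]

namespace IsSchurStable

variable {M : Matrix n n ℝ}

theorem of_charpoly_eq (h : IsSchurStable M) {N : Matrix m m ℝ}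
    (hNM : N.charpoly = M.charpoly) : IsSchurStable N := by
  rw [isSchurStable_iff_isRoot_charpoly, hNM]
  exact isSchurStable_iff_isRoot_charpoly.mp h

theorem reindex (h : IsSchurStable M) (e : n ≃ m) : IsSchurStable (reindex e e M) :=
  h.of_charpoly_eq (charpoly_reindex e M)

theorem of_units_conj {U : (Matrix n n ℝ)ˣ} (h : IsSchurStable (U.val * M * U⁻¹.val)) :
    IsSchurStable M :=
  h.of_charpoly_eq (by rw [coe_units_inv, charpoly_units_conj])

theorem fromBlocks_zero₂₁ {A : Matrix n n ℝ} {D : Matrix m m ℝ} (hA : IsSchurStable A)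
    (hD : IsSchurStable D) (B : Matrix n m ℝ) : IsSchurStable (fromBlocks A B 0 D) := by
  rw [isSchurStable_iff_isRoot_charpoly] at *
  intro z hz
  rw [charpoly_fromBlocks_zero₂₁, Polynomial.map_mul, IsRoot, eval_mul, mul_eq_zero] at hz
  exact hz.elim (hA z) (hD z)

section Frobenius

-- The Frobenius norm is invariant under transposition and under complexification.
attribute [local instance] frobeniusNormedRing frobeniusNormedAlgebra

theorem spectralRadius_lt_one (h : IsSchurStable M) :
    spectralRadius ℂ (M.map Complex.ofReal) < 1 := by
  rcases (spectrum ℂ (M.map Complex.ofReal)).eq_empty_or_nonempty with hσ | hσ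
  · simp [spectralRadius, hσ]
  · exact spectrum.spectralRadius_lt_of_forall_lt_of_nonempty hσ fun z hz => by
      exact_mod_cast h z hz

theorem summable_transpose_pow_mul_pow (h : IsSchurStable M) :
    Summable fun k => (M ^ k)ᵀ * M ^ k := by
  obtain ⟨r, hρr, hr1⟩ := ENNReal.lt_iff_exists_nnreal_btwn.mp h.spectralRadius_lt_one
  have hr1 : (r : ℝ) < 1 := by exact_mod_cast hr1
  refine .of_norm_bounded_eventually (g := fun k => ((r : ℝ) ^ 2) ^ k)
    (summable_geometric_of_lt_one (by positivity) (by nlinarith [r.2])) ?_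
  rw [Nat.cofinite_eq_atTop]
  filter_upwards [spectrum.eventually_norm_pow_le_of_spectralRadius_lt hρr] with k hk
  have hpow : M.map Complex.ofReal ^ k = (M ^ k).map Complex.ofReal :=
    (Matrix.map_pow M Complex.ofRealHom k).symm
  rw [hpow, frobenius_norm_map_eq _ _ Complex.norm_real] at hk
  calc ‖(M ^ k)ᵀ * M ^ k‖ ≤ ‖(M ^ k)ᵀ‖ * ‖M ^ k‖ := norm_mul_le _ _
    _ = ‖M ^ k‖ ^ 2 := by rw [frobenius_norm_transpose, sq]
    _ ≤ ((r : ℝ) ^ k) ^ 2 := by gcongr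
    _ = ((r : ℝ) ^ 2) ^ k := by ring

end Frobenius

theorem exists_isSchurStable_inv_smul (h : IsSchurStable M) :
    ∃ s : ℝ, 0 < s ∧ s < 1 ∧ IsSchurStable (s⁻¹ • M) := by
  obtain ⟨s, hρs, hs1⟩ := ENNReal.lt_iff_exists_nnreal_btwn.mp h.spectralRadius_lt_one
  have hs0 : (0 : ℝ) < s := by exact_mod_cast pos_of_gt hρs
  refine ⟨s, hs0, by exact_mod_cast hs1, fun z hz => ?_⟩
  have hs : (s : ℂ) ≠ 0 := by exact_mod_cast hs0.ne'
  let u : ℂˣ := Units.mk0 (s : ℂ) hs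
  have hu : u • (((s : ℝ)⁻¹ • M).map Complex.ofReal) = M.map Complex.ofReal := by
    ext i j
    simp [u, Units.smul_def, hs]
  have hsz : u • z ∈ spectrum ℂ (M.map Complex.ofReal) := by
    rw [← hu]
    exact spectrum.smul_mem_smul_iff.mpr hz
  have hle : (‖u • z‖₊ : ℝ≥0∞) < s :=
    (le_iSup₂ (f := fun k (_ : k ∈ spectrum ℂ (M.map Complex.ofReal)) => (‖k‖₊ : ℝ≥0∞))
      _ hsz).trans_lt hρs
  have hlt : ‖u • z‖ < s := by exact_mod_cast hle
  simp only [u, Units.smul_def, Units.val_mk0, smul_eq_mul, norm_mul, Complex.norm_real,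
    Real.norm_of_nonneg hs0.le] at hlt
  exact (mul_lt_iff_lt_one_right hs0).mp hlt

theorem exists_lyapunov (h : IsSchurStable M) :
    ∃ (P : Matrix n n ℝ) (μ ε : ℝ), P.IsSymm ∧ μ ∈ Set.Ico (-1 : ℝ) 0 ∧ 0 < ε ∧
      (P - ε • 1).PosDef ∧ ((1 + μ) • P - Mᵀ * P * M).PosSemidef := by
  obtain ⟨s, hs0, hs1, hG⟩ := h.exists_isSchurStable_inv_smul
  set G := s⁻¹ • M
  obtain ⟨P, hP⟩ := hG.summable_transpose_pow_mul_pow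
  have hPsd : P.PosSemidef := posSemidef_of_hasSum
    (fun k => by simpa using posSemidef_conjTranspose_mul_self (G ^ k)) hP
  have hP1 : (P - 1).PosSemidef := by
    rw [← transpose_mul_mul_eq_sub_one_of_hasSum hP]
    simpa using hPsd.conjTranspose_mul_mul_same G
  have hMPM : Mᵀ * P * M = s ^ 2 • (P - 1) := by
    have hM : M = s • G := by simp [G, smul_smul, hs0.ne']
    rw [← transpose_mul_mul_eq_sub_one_of_hasSum hP, hM]
    simp only [transpose_smul, Matrix.smul_mul, Matrix.mul_smul, smul_smul, sq]
  refine ⟨P, s ^ 2 - 1, 1 / 2, hPsd.isHermitian, ⟨by nlinarith, by nlinarith⟩, by norm_num,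
    ?_, ?_⟩
  · rw [show P - (1 / 2 : ℝ) • 1 = (P - 1) + (1 / 2 : ℝ) • 1 by module]
    exact PosDef.posSemidef_add hP1 (PosDef.one.smul (by norm_num))
  · rw [hMPM, show (1 + (s ^ 2 - 1)) • P - s ^ 2 • (P - 1) = s ^ 2 • (1 : Matrix n n ℝ) by module]
    exact PosSemidef.one.smul (sq_nonneg s)

end IsSchurStable

theorem isSchurStable_observer {u y : Type*} [Fintype u] [Fintype y]
    {A : Matrix n n ℝ} {B : Matrix n u ℝ} {C : Matrix y n ℝ} {K : Matrix u n ℝ}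
    {L : Matrix n y ℝ} (hK : IsSchurStable (A + B * K)) (hL : IsSchurStable (A - L * C)) :
    IsSchurStable (fromBlocks A (B * K) (L * C) (A + B * K - L * C)) := by
  let U : (Matrix (n ⊕ n) (n ⊕ n) ℝ)ˣ :=
    ⟨fromBlocks 1 0 (-1) 1, fromBlocks 1 0 1 1,
      by simp [fromBlocks_multiply, ← fromBlocks_one],
      by simp [fromBlocks_multiply, ← fromBlocks_one]⟩
  refine IsSchurStable.of_units_conj (U := U) ?_
  convert hK.fromBlocks_zero₂₁ hL (B * K) using 1
  simp only [U, Units.inv_mk, fromBlocks_multiply]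
  congr 1 <;> simp <;> abel

end Matrix

theorem exists_controller_isSchurStable_Fcl {nx nc nu ny : ℕ} (hnc : nx ≤ nc)
    {A : Matrix (Fin nx) (Fin nx) ℝ} {B : Matrix (Fin nx) (Fin nu) ℝ}
    {C : Matrix (Fin ny) (Fin nx) ℝ} {K : Matrix (Fin nu) (Fin nx) ℝ}
    {L : Matrix (Fin nx) (Fin ny) ℝ} (hK : IsSchurStable (A + B * K))
    (hL : IsSchurStable (A - L * C)) :
    ∃ (Ac : Matrix (Fin nc) (Fin nc) ℝ) (Bc : Matrix (Fin nc) (Fin ny) ℝ)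
      (Cc : Matrix (Fin nu) (Fin nc) ℝ), IsSchurStable (Fcl A B C Ac Bc Cc 0) := by
  let e : Fin nx ⊕ Fin (nc - nx) ≃ Fin nc :=
    finSumFinEquiv.trans (finCongr (Nat.add_sub_cancel' hnc))
  refine ⟨reindex e e (fromBlocks (A + B * K - L * C) 0 0 0),
    reindex e (Equiv.refl _) (fromRows L 0), reindex (Equiv.refl _) e (fromCols K 0), ?_⟩
  have hF : Fcl A B C (reindex e e (fromBlocks (A + B * K - L * C) 0 0 0))
      (reindex e (Equiv.refl _) (fromRows L 0)) (reindex (Equiv.refl _) e (fromCols K 0)) 0 =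
      reindex ((Equiv.refl _).sumCongr e) ((Equiv.refl _).sumCongr e)
        (fromBlocks A (B * fromCols K 0) (fromRows L 0 * C)
          (fromBlocks (A + B * K - L * C) 0 0 0)) := by
    rw [Fcl, reindex_sumCongr_refl_fromBlocks, Matrix.mul_zero, Matrix.zero_mul, add_zero]
    rfl
  rw [hF, mul_fromCols, fromRows_mul, Matrix.mul_zero, Matrix.zero_mul,
    ← reindex_sumAssoc_fromBlocks, fromRows_zero, fromCols_zero]
  have hpadded := (isSchurStable_observer hK hL).fromBlocks_zero₂₁
    (isSchurStable_zero (n := Fin (nc - nx))) 0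
  exact (hpadded.reindex _).reindex _

theorem stmt2 {nx nc nu ny : ℕ} (hnc : nx ≤ nc)
    (A : Matrix (Fin nx) (Fin nx) ℝ) (B : Matrix (Fin nx) (Fin nu) ℝ)
    (C : Matrix (Fin ny) (Fin nx) ℝ)
    (hstab : ∃ K : Matrix (Fin nu) (Fin nx) ℝ,
      ∀ zev ∈ spectrum ℂ ((A + B * K).map (Complex.ofReal : ℝ → ℂ)), ‖zev‖ < 1)
    (hdet : ∃ L : Matrix (Fin nx) (Fin ny) ℝ,
      ∀ zev ∈ spectrum ℂ ((A - L * C).map (Complex.ofReal : ℝ → ℂ)), ‖zev‖ < 1) :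
    ∃ (Ac : Matrix (Fin nc) (Fin nc) ℝ) (Bc : Matrix (Fin nc) (Fin ny) ℝ)
      (Cc : Matrix (Fin nu) (Fin nc) ℝ) (Dc : Matrix (Fin nu) (Fin ny) ℝ)
      (P : Matrix (Fin nx ⊕ Fin nc) (Fin nx ⊕ Fin nc) ℝ) (μstar ϵstar : ℝ),
      P.IsSymm ∧ μstar ∈ Set.Ico (-1 : ℝ) 0 ∧ 0 < ϵstar ∧
      (P - ϵstar • 1).PosDef ∧
      ((1 + μstar) • P -
        (Fcl A B C Ac Bc Cc Dc)ᵀ * P * Fcl A B C Ac Bc Cc Dc).PosSemidef := by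
  obtain ⟨K, hK⟩ := hstab
  obtain ⟨L, hL⟩ := hdet
  obtain ⟨Ac, Bc, Cc, hF⟩ := exists_controller_isSchurStable_Fcl hnc hK hL
  obtain ⟨P, μ, ε, hP⟩ := hF.exists_lyapunov
  exact ⟨Ac, Bc, Cc, 0, P, μ, ε, hP⟩
end

section
/- Suppose P(ν) = [[Y, I],[I, X]] is positive definite. If L̃(ν) = [[δ·P(ν), R(ν)ᵀ],[R(ν), 2·I − X]] is positive semidefinite, then S(ν) = [[δ·P(ν), F̃(ν)ᵀ],[F̃(ν), P(ν)]] is positive semidefinite. -/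
open Matrix

/-- P(ν) = [[Y, I],[I, X]]. -/
def Pnu {n : ℕ} (X Y : Matrix (Fin n) (Fin n) ℝ) :
    Matrix (Fin n ⊕ Fin n) (Fin n ⊕ Fin n) ℝ :=
  Matrix.fromBlocks Y 1 1 X

/-- R(ν) = [A·Y + B·K₃, A + B·K₄·C]. -/
def Rnu {n nu ny : ℕ} (A : Matrix (Fin n) (Fin n) ℝ) (B : Matrix (Fin n) (Fin nu) ℝ)
    (C : Matrix (Fin ny) (Fin n) ℝ) (X Y : Matrix (Fin n) (Fin n) ℝ)
    (K3 : Matrix (Fin nu) (Fin n) ℝ) (K4 : Matrix (Fin nu) (Fin ny) ℝ) :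
    Matrix (Fin n) (Fin n ⊕ Fin n) ℝ :=
  Matrix.fromCols (A * Y + B * K3) (A + B * K4 * C)

/-- F̃(ν) = [[A·Y + B·K₃, A + B·K₄·C],[X·(A·Y + B·K₃), X·(A + B·K₄·C)]]. -/
def Ftil {n nu ny : ℕ} (A : Matrix (Fin n) (Fin n) ℝ) (B : Matrix (Fin n) (Fin nu) ℝ)
    (C : Matrix (Fin ny) (Fin n) ℝ) (X Y : Matrix (Fin n) (Fin n) ℝ)
    (K3 : Matrix (Fin nu) (Fin n) ℝ) (K4 : Matrix (Fin nu) (Fin ny) ℝ) :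
    Matrix (Fin n ⊕ Fin n) (Fin n ⊕ Fin n) ℝ :=
  Matrix.fromBlocks (A * Y + B * K3) (A + B * K4 * C)
    (X * (A * Y + B * K3)) (X * (A + B * K4 * C))

/-! With U = [I, X] one has F̃ = Uᵀ R, so the congruence of L̃ by diag(I, U) is
[[δP, F̃ᵀ], [F̃, Uᵀ(2I − X)U]] ⪰ 0. The gap P − Uᵀ(2I − X)U equals WᵀPW for
W = [[I, 0], [−I, I − X]], hence is ⪰ 0, and adding it to the lower-right block gives S. -/

namespace Matrix

variable {l m n R : Type*} [Fintype l] [Fintype m] [Fintype n] [DecidableEq m]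
  [Ring R] [PartialOrder R] [StarRing R]

theorem PosSemidef.fromBlocks_conj_right {A : Matrix m m R} {B : Matrix n m R}
    {D : Matrix n n R} (h : (fromBlocks A Bᴴ B D).PosSemidef) (U : Matrix n l R) :
    (fromBlocks A (Bᴴ * U) (Uᴴ * B) (Uᴴ * D * U)).PosSemidef := by
  simpa [fromBlocks_conjTranspose, fromBlocks_multiply, Matrix.mul_assoc] using
    h.conjTranspose_mul_mul_same (fromBlocks (1 : Matrix m m R) 0 0 U)

omit [DecidableEq m] in
theorem PosSemidef.fromBlocks_add_right_bottom [AddLeftMono R] {A : Matrix m m R}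
    {B : Matrix m n R} {C : Matrix n m R} {D E : Matrix n n R} (h : (fromBlocks A B C D).PosSemidef)
    (hE : E.PosSemidef) : (fromBlocks A B C (D + E)).PosSemidef := by
  classical
  have hE₂₂ : (fromBlocks 0 0 0 E : Matrix (m ⊕ n) (m ⊕ n) R).PosSemidef := by
    convert hE.conjTranspose_mul_mul_same (fromCols (0 : Matrix n m R) (1 : Matrix n n R))
    ext (i | i) (j | j) <;> simp [conjTranspose_fromCols_eq_fromRows_conjTranspose]
  simpa [fromBlocks_add] using h.add hE₂₂

end Matrix

section

variable {n nu ny : ℕ} (A : Matrix (Fin n) (Fin n) ℝ) (B : Matrix (Fin n) (Fin nu) ℝ)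
  (C : Matrix (Fin ny) (Fin n) ℝ) {X : Matrix (Fin n) (Fin n) ℝ} (Y : Matrix (Fin n) (Fin n) ℝ)
  (K3 : Matrix (Fin nu) (Fin n) ℝ) (K4 : Matrix (Fin nu) (Fin ny) ℝ)

theorem Ftil_eq_transpose_mul_Rnu (hX : X.IsSymm) :
    Ftil A B C X Y K3 K4 = (fromCols 1 X)ᵀ * Rnu A B C X Y K3 K4 := by
  rw [transpose_fromCols, transpose_one, hX.eq, Rnu, fromRows_mul_fromCols,
    Matrix.one_mul, Matrix.one_mul, Ftil]

theorem Pnu_eq_transpose_mul_mul_add_transpose_mul_mul (hX : X.IsSymm) :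
    Pnu X Y = (fromCols 1 X)ᵀ * ((2 : ℝ) • 1 - X) * fromCols 1 X +
      (fromBlocks 1 0 (-1) (1 - X))ᵀ * Pnu X Y * fromBlocks 1 0 (-1) (1 - X) := by
  simp only [Pnu, transpose_fromCols, fromBlocks_transpose, transpose_one, transpose_zero,
    transpose_neg, transpose_sub, hX.eq, fromRows_mul, mul_fromCols,
    fromCols_fromRows_eq_fromBlocks, fromBlocks_multiply, fromBlocks_add, fromBlocks_inj, two_smul]
  refine ⟨?_, ?_, ?_, ?_⟩ <;> noncomm_ring

end

theorem stmt3_general {n nu ny : ℕ}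
    (A : Matrix (Fin n) (Fin n) ℝ) (B : Matrix (Fin n) (Fin nu) ℝ)
    (C : Matrix (Fin ny) (Fin n) ℝ)
    (X Y : Matrix (Fin n) (Fin n) ℝ) (hX : X.IsSymm)
    (K3 : Matrix (Fin nu) (Fin n) ℝ) (K4 : Matrix (Fin nu) (Fin ny) ℝ)
    (δ : ℝ)
    (hP : (Pnu X Y).PosDef)
    (hLtil : (Matrix.fromBlocks (δ • Pnu X Y) (Rnu A B C X Y K3 K4)ᵀ
      (Rnu A B C X Y K3 K4) ((2 : ℝ) • 1 - X)).PosSemidef) :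
    (Matrix.fromBlocks (δ • Pnu X Y) (Ftil A B C X Y K3 K4)ᵀ
      (Ftil A B C X Y K3 K4) (Pnu X Y)).PosSemidef := by
  have hL : (fromBlocks (δ • Pnu X Y) (Rnu A B C X Y K3 K4)ᴴ (Rnu A B C X Y K3 K4)
      ((2 : ℝ) • 1 - X)).PosSemidef := by
    rwa [conjTranspose_eq_transpose_of_trivial]
  have hS := (hL.fromBlocks_conj_right (fromCols (1 : Matrix (Fin n) (Fin n) ℝ) X))
    |>.fromBlocks_add_right_bottom
      (hP.posSemidef.conjTranspose_mul_mul_same (fromBlocks 1 0 (-1) (1 - X)))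
  simp only [conjTranspose_eq_transpose_of_trivial] at hS
  rw [Ftil_eq_transpose_mul_Rnu A B C Y K3 K4 hX, transpose_mul, transpose_transpose]
  rwa [← Pnu_eq_transpose_mul_mul_add_transpose_mul_mul Y hX] at hS

theorem stmt3 {n nu ny : ℕ}
    (A : Matrix (Fin n) (Fin n) ℝ) (B : Matrix (Fin n) (Fin nu) ℝ)
    (C : Matrix (Fin ny) (Fin n) ℝ)
    (X Y : Matrix (Fin n) (Fin n) ℝ) (hX : X.IsSymm) (hY : Y.IsSymm)
    (K1 : Matrix (Fin n) (Fin n) ℝ) (K2 : Matrix (Fin n) (Fin ny) ℝ)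
    (K3 : Matrix (Fin nu) (Fin n) ℝ) (K4 : Matrix (Fin nu) (Fin ny) ℝ)
    (δ : ℝ) (hδ : δ ∈ Set.Ici (1 : ℝ))
    (hP : (Pnu X Y).PosDef)
    (hLtil : (Matrix.fromBlocks (δ • Pnu X Y) (Rnu A B C X Y K3 K4)ᵀ
      (Rnu A B C X Y K3 K4) ((2 : ℝ) • 1 - X)).PosSemidef) :
    (Matrix.fromBlocks (δ • Pnu X Y) (Ftil A B C X Y K3 K4)ᵀ
      (Ftil A B C X Y K3 K4) (Pnu X Y)).PosSemidef :=
  stmt3_general A B C X Y hX K3 K4 δ hP hLtil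
end

section
/- Let A ∈ ℝ^{n×n}, B ∈ ℝ^{n×n_u}, C ∈ ℝ^{n_y×n}, let X, Y, U, V ∈ ℝ^{n×n} with U and V invertible, and let controller matrices A_c ∈ ℝ^{n×n}, B_c ∈ ℝ^{n×n_y}, C_c ∈ ℝ^{n_u×n}, D_c ∈ ℝ^{n_u×n_y} and matrices K_1 ∈ ℝ^{n×n}, K_2 ∈ ℝ^{n×n_y}, K_3 ∈ ℝ^{n_u×n}, K_4 ∈ ℝ^{n_u×n_y} satisfy the change-of-variables relation [[K_1 − X·A·Y, K_2],[K_3, K_4]] = [[U, X·B],[0, I]] · [[A_c, B_c],[C_c, D_c]] · [[Vᵀ, 0],[C·Y, I]]. Define F = [[A + B·D_c·C, B·C_c],[B_c·C, A_c]], H = [[I, 0],[0, 0]], 𝒴 = [[Y, I],[Vᵀ, 0]], 𝒵 = [[I, 0],[X, U]]. Then 𝒵·F·𝒴 = [[A·Y + B·K_3, A + B·K_4·C],[K_1, X·A + K_2·C]] and 𝒵·(H·F)·𝒴 = [[A·Y + B·K_3, A + B·K_4·C],[X·(A·Y + B·K_3), X·(A + B·K_4·C)]]. -/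
/-!
Reading off the blocks of the change-of-variables relation gives `K₄ = D_c`,
`K₃ = C_c Vᵀ + D_c C Y`, `K₂ = U B_c + X B D_c` and `K₁ - X A Y = U (A_c Vᵀ + B_c C Y) + X B K₃`.
The first block row of `F 𝒴` is then `[A Y + B K₃, A + B K₄ C]`; since `𝒵` is block lower
triangular with identity corner, both products keep that row and combine it with the second
row (of `F 𝒴`, resp. of `H F 𝒴 = 0`) through `X` and `U`.
-/

open Matrix

section

variable {R l m n o p q : Type*} [Semiring R]

theorem Matrix.fromBlocks_one_zero_mul [Fintype l] [Fintype m] [DecidableEq l]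
    (X : Matrix m l R) (U : Matrix m m R)
    (P : Matrix l n R) (Q : Matrix l o R) (S : Matrix m n R) (T : Matrix m o R) :
    fromBlocks 1 0 X U * fromBlocks P Q S T = fromBlocks P Q (X * P + U * S) (X * Q + U * T) := by
  simp [fromBlocks_multiply]

theorem Matrix.fromBlocks_one_zero_zero_zero_mul [Fintype l] [Fintype m] [DecidableEq l]
    (P : Matrix l n R) (Q : Matrix l o R) (S : Matrix m n R) (T : Matrix m o R) :
    fromBlocks (1 : Matrix l l R) 0 0 (0 : Matrix m m R) * fromBlocks P Q S T =
      fromBlocks P Q 0 0 := by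
  simp [fromBlocks_multiply]

theorem Matrix.fromBlocks_zero_one_mul_mul_fromBlocks_zero_one
    [Fintype m] [Fintype n] [Fintype o] [Fintype p] [DecidableEq o] [DecidableEq p]
    (P : Matrix l m R) (Q : Matrix l o R) (Ac : Matrix m n R) (Bc : Matrix m p R)
    (Cc : Matrix o n R) (Dc : Matrix o p R) (W : Matrix n q R) (S : Matrix p q R) :
    fromBlocks P Q 0 1 * fromBlocks Ac Bc Cc Dc * fromBlocks W 0 S (1 : Matrix p p R) =
      fromBlocks (P * (Ac * W + Bc * S) + Q * (Cc * W + Dc * S)) (P * Bc + Q * Dc)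
        (Cc * W + Dc * S) Dc := by
  simp only [fromBlocks_multiply, Matrix.mul_add, Matrix.add_mul, Matrix.mul_assoc, Matrix.mul_zero,
    Matrix.zero_mul, Matrix.mul_one, Matrix.one_mul, zero_add]
  congr 1
  abel

end

theorem stmt8_general {n nu ny : ℕ}
    (A : Matrix (Fin n) (Fin n) ℝ) (B : Matrix (Fin n) (Fin nu) ℝ)
    (C : Matrix (Fin ny) (Fin n) ℝ)
    (X Y U V : Matrix (Fin n) (Fin n) ℝ)
    (Ac : Matrix (Fin n) (Fin n) ℝ) (Bc : Matrix (Fin n) (Fin ny) ℝ)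
    (Cc : Matrix (Fin nu) (Fin n) ℝ) (Dc : Matrix (Fin nu) (Fin ny) ℝ)
    (K1 : Matrix (Fin n) (Fin n) ℝ) (K2 : Matrix (Fin n) (Fin ny) ℝ)
    (K3 : Matrix (Fin nu) (Fin n) ℝ) (K4 : Matrix (Fin nu) (Fin ny) ℝ)
    (hcov : Matrix.fromBlocks (K1 - X * A * Y) K2 K3 K4 =
      Matrix.fromBlocks U (X * B) (0 : Matrix (Fin nu) (Fin n) ℝ)
          (1 : Matrix (Fin nu) (Fin nu) ℝ) *
        Matrix.fromBlocks Ac Bc Cc Dc *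
        Matrix.fromBlocks Vᵀ (0 : Matrix (Fin n) (Fin ny) ℝ) (C * Y)
          (1 : Matrix (Fin ny) (Fin ny) ℝ)) :
    Matrix.fromBlocks (1 : Matrix (Fin n) (Fin n) ℝ)
        (0 : Matrix (Fin n) (Fin n) ℝ) X U *
      Matrix.fromBlocks (A + B * Dc * C) (B * Cc) (Bc * C) Ac *
      Matrix.fromBlocks Y (1 : Matrix (Fin n) (Fin n) ℝ) Vᵀ
        (0 : Matrix (Fin n) (Fin n) ℝ) =
      Matrix.fromBlocks (A * Y + B * K3) (A + B * K4 * C) K1 (X * A + K2 * C) ∧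
    Matrix.fromBlocks (1 : Matrix (Fin n) (Fin n) ℝ)
        (0 : Matrix (Fin n) (Fin n) ℝ) X U *
      (Matrix.fromBlocks (1 : Matrix (Fin n) (Fin n) ℝ) 0 0
          (0 : Matrix (Fin n) (Fin n) ℝ) *
        Matrix.fromBlocks (A + B * Dc * C) (B * Cc) (Bc * C) Ac) *
      Matrix.fromBlocks Y (1 : Matrix (Fin n) (Fin n) ℝ) Vᵀ
        (0 : Matrix (Fin n) (Fin n) ℝ) =
      Matrix.fromBlocks (A * Y + B * K3) (A + B * K4 * C)
        (X * (A * Y + B * K3)) (X * (A + B * K4 * C)) := by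
  rw [fromBlocks_zero_one_mul_mul_fromBlocks_zero_one, fromBlocks_inj] at hcov
  obtain ⟨hK1, hK2, hK3, rfl⟩ := hcov
  have hFY : fromBlocks (A + B * K4 * C) (B * Cc) (Bc * C) Ac * fromBlocks Y 1 Vᵀ 0 =
      fromBlocks (A * Y + B * K3) (A + B * K4 * C) (Ac * Vᵀ + Bc * (C * Y)) (Bc * C) := by
    rw [hK3, fromBlocks_multiply]
    simp only [Matrix.mul_one, Matrix.mul_zero, add_zero, Matrix.add_mul, Matrix.mul_add,
      Matrix.mul_assoc]
    congr 1 <;> abel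
  constructor
  · rw [Matrix.mul_assoc, hFY, fromBlocks_one_zero_mul]
    congr 1
    · rw [eq_add_of_sub_eq hK1, hK3]
      simp only [Matrix.mul_add, Matrix.mul_assoc]
      abel
    · rw [hK2]
      simp only [Matrix.mul_add, Matrix.add_mul, Matrix.mul_assoc]
      abel
  · rw [Matrix.mul_assoc, Matrix.mul_assoc, hFY, fromBlocks_one_zero_zero_zero_mul,
      fromBlocks_one_zero_mul]
    simp

theorem stmt8 {n nu ny : ℕ}
    (A : Matrix (Fin n) (Fin n) ℝ) (B : Matrix (Fin n) (Fin nu) ℝ)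
    (C : Matrix (Fin ny) (Fin n) ℝ)
    (X Y U V : Matrix (Fin n) (Fin n) ℝ) (hU : IsUnit U) (hV : IsUnit V)
    (Ac : Matrix (Fin n) (Fin n) ℝ) (Bc : Matrix (Fin n) (Fin ny) ℝ)
    (Cc : Matrix (Fin nu) (Fin n) ℝ) (Dc : Matrix (Fin nu) (Fin ny) ℝ)
    (K1 : Matrix (Fin n) (Fin n) ℝ) (K2 : Matrix (Fin n) (Fin ny) ℝ)
    (K3 : Matrix (Fin nu) (Fin n) ℝ) (K4 : Matrix (Fin nu) (Fin ny) ℝ)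
    (hcov : Matrix.fromBlocks (K1 - X * A * Y) K2 K3 K4 =
      Matrix.fromBlocks U (X * B) (0 : Matrix (Fin nu) (Fin n) ℝ)
          (1 : Matrix (Fin nu) (Fin nu) ℝ) *
        Matrix.fromBlocks Ac Bc Cc Dc *
        Matrix.fromBlocks Vᵀ (0 : Matrix (Fin n) (Fin ny) ℝ) (C * Y)
          (1 : Matrix (Fin ny) (Fin ny) ℝ)) :
    Matrix.fromBlocks (1 : Matrix (Fin n) (Fin n) ℝ)
        (0 : Matrix (Fin n) (Fin n) ℝ) X U *
      Matrix.fromBlocks (A + B * Dc * C) (B * Cc) (Bc * C) Ac *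
      Matrix.fromBlocks Y (1 : Matrix (Fin n) (Fin n) ℝ) Vᵀ
        (0 : Matrix (Fin n) (Fin n) ℝ) =
      Matrix.fromBlocks (A * Y + B * K3) (A + B * K4 * C) K1 (X * A + K2 * C) ∧
    Matrix.fromBlocks (1 : Matrix (Fin n) (Fin n) ℝ)
        (0 : Matrix (Fin n) (Fin n) ℝ) X U *
      (Matrix.fromBlocks (1 : Matrix (Fin n) (Fin n) ℝ) 0 0
          (0 : Matrix (Fin n) (Fin n) ℝ) *
        Matrix.fromBlocks (A + B * Dc * C) (B * Cc) (Bc * C) Ac) *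
      Matrix.fromBlocks Y (1 : Matrix (Fin n) (Fin n) ℝ) Vᵀ
        (0 : Matrix (Fin n) (Fin n) ℝ) =
      Matrix.fromBlocks (A * Y + B * K3) (A + B * K4 * C)
        (X * (A * Y + B * K3)) (X * (A + B * K4 * C)) :=
  stmt8_general A B C X Y U V Ac Bc Cc Dc K1 K2 K3 K4 hcov
end

section
/- Let n > m > 0 and T ≥ 1 be integers with n_y ≤ n_c, and suppose all entries of Ā_c ∈ ℝ^{n_c×n_c}, B̄_c ∈ ℝ^{n_c×n_y}, C̄_c ∈ ℝ^{n_u×n_c}, D̄_c ∈ ℝ^{n_u×n_y} and of ȳ[k] ∈ ℝ^{n_y} for every k lie in Q(n,m). Let x_c : ℕ → ℝ^{n_c} and u : ℕ → ℝ^{n_u} satisfy x_c[0] = 0, x_c[k+1] = Ā_c·x_c[k] + B̄_c·ȳ[k] if (k+1) mod T ≠ 0, x_c[k+1] = 0 if (k+1) mod T = 0, and u[k] = C̄_c·x_c[k] + D̄_c·ȳ[k]. Then for every k with k mod T ≥ 1, every entry of x_c[k] lies in Q((n_c+1)·(k mod T − 1) + n_y + n·(k mod T + 1), m·(k mod T +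 1)), and for every k, every entry of u[k] lies in Q((n_c+1)·(k mod T) + n_y + n·(k mod T + 2), m·(k mod T + 2)). -/
/-!
In two's complement, `Qset n m` (for `1 ≤ n`) is the set of numbers `z / 2 ^ m` with `z` an integer
in `[-2 ^ (n - 1), 2 ^ (n - 1))`. In this form a product of elements of `Qset n₁ m₁` and
`Qset n₂ m₂` lies in `Qset (n₁ + n₂) (m₁ + m₂)`, a sum of `c` elements of `Qset p q` lies in
`Qset (p + c) q`, and `Qset n m ⊆ Qset (n + d) (m + d)`. So one step `x ↦ E x + F y` of the
filter adds `n + n_c + 1` to the word length and `m` to the fractional length of the bound on `x`;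
since the state is reset to `0` whenever `T ∣ k`, induction on `k` gives bounds that depend only
on `k % T`.
-/

open Matrix

/-- The fixed-point set Q(n,m) of numbers representable with n bits of which m
fractional: Q(n,m) = {−b_n·2^{n−m−1} + Σ_{i=1}^{n−1} 2^{i−m−1}·b_i : b_i ∈ {0,1}}. -/
def Qset (n m : ℕ) : Set ℝ :=
  {x | ∃ b : ℕ → Bool,
    x = -((if b n then (1 : ℝ) else 0) * (2 : ℝ) ^ ((n : ℤ) - (m : ℤ) - 1)) +
        ∑ i ∈ Finset.Ico 1 n, (if b i then (1 : ℝ) else 0) * (2 : ℝ) ^ ((i : ℤ) - (m : ℤ) - 1)}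

theorem Nat.add_one_mod_of_ne_zero {k T : ℕ} (h : (k + 1) % T ≠ 0) :
    (k + 1) % T = k % T + 1 := by
  rcases Nat.lt_trichotomy T 1 with hT | rfl | hT
  · simp [Nat.lt_one_iff.mp hT]
  · simp [Nat.mod_one] at h
  · have hk := Nat.mod_lt k (by omega : 0 < T)
    rw [Nat.add_mod_eq_ite, Nat.mod_eq_of_lt hT] at h ⊢
    split_ifs at h ⊢ <;> omega

theorem Nat.exists_bits_iff_lt {w p : ℕ} :
    (∃ c : ℕ → Bool, ∑ j ∈ Finset.range p, (if c j then 2 ^ j else 0) = w) ↔ w < 2 ^ p := by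
  constructor
  · rintro ⟨c, rfl⟩
    rw [← Finset.sum_filter]
    exact Nat.geomSum_lt le_rfl fun j hj => Finset.mem_range.1 (Finset.mem_filter.1 hj).1
  · intro hw
    refine ⟨w.testBit, ?_⟩
    rw [← Finset.sum_filter]
    convert Finset.sum_toFinset_bitIndices_two_pow w using 2
    ext j
    simp only [Finset.mem_filter, Finset.mem_range, List.mem_toFinset, Nat.mem_bitIndices,
      and_iff_right_iff_imp]
    intro hj
    by_contra! hpj
    rw [Nat.testBit_eq_false_of_lt (hw.trans_le (Nat.pow_le_pow_right two_pos hpj))] at hj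
    exact Bool.false_ne_true hj

theorem Qset_succ_value (b : ℕ → Bool) (p m : ℕ) :
    -((if b (p + 1) then (1 : ℝ) else 0) * (2 : ℝ) ^ (((p + 1 : ℕ) : ℤ) - (m : ℤ) - 1)) +
        ∑ i ∈ Finset.Ico 1 (p + 1), (if b i then (1 : ℝ) else 0) * (2 : ℝ) ^ ((i : ℤ) - (m : ℤ) - 1)
      = ((-(if b (p + 1) then 2 ^ p else 0) +
          ((∑ j ∈ Finset.range p, (if b (j + 1) then 2 ^ j else 0) : ℕ) : ℤ) : ℤ) : ℝ) / 2 ^ m := by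
  have hpow (j : ℕ) : (2 : ℝ) ^ (((j + 1 : ℕ) : ℤ) - (m : ℤ) - 1) = 2 ^ j / 2 ^ m := by
    rw [show ((j + 1 : ℕ) : ℤ) - m - 1 = j - m by push_cast; ring, zpow_sub₀ two_ne_zero,
      zpow_natCast, zpow_natCast]
  rw [Finset.sum_Ico_eq_sum_range]
  simp only [Nat.add_sub_cancel, add_comm 1, hpow]
  push_cast
  rw [add_div, Finset.sum_div]
  congr 1
  · split_ifs <;> simp [neg_div]
  · refine Finset.sum_congr rfl fun j _ => ?_
    split_ifs <;> simp

theorem mem_Qset_iff {x : ℝ} {n m : ℕ} (hn : 1 ≤ n) :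
    x ∈ Qset n m ↔ ∃ z : ℤ, -2 ^ (n - 1) ≤ z ∧ z < 2 ^ (n - 1) ∧ x = z / 2 ^ m := by
  obtain ⟨p, rfl⟩ : ∃ p, n = p + 1 := ⟨n - 1, by omega⟩
  simp only [Nat.add_sub_cancel]
  constructor
  · rintro ⟨b, rfl⟩
    set S := ∑ j ∈ Finset.range p, if b (j + 1) then 2 ^ j else 0
    have hS : (S : ℤ) < 2 ^ p := mod_cast Nat.exists_bits_iff_lt.1 ⟨_, rfl⟩
    refine ⟨_, ?_, ?_, Qset_succ_value b p m⟩ <;> split_ifs <;> omega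
  · rintro ⟨z, hlo, hhi, rfl⟩
    set c : Bool := decide (z < 0)
    have hw : 0 ≤ z + (if c then 2 ^ p else 0) ∧ z + (if c then 2 ^ p else 0) < 2 ^ p := by
      by_cases hz : z < 0 <;> simp [c, hz] <;> omega
    obtain ⟨bits, hbits⟩ := Nat.exists_bits_iff_lt.2 ((Int.toNat_lt hw.1).2 hw.2)
    let b : ℕ → Bool := fun i => if i = p + 1 then c else bits (i - 1)
    refine ⟨b, ((Qset_succ_value b p m).trans ?_).symm⟩
    have hsum : ∑ j ∈ Finset.range p, (if b (j + 1) then 2 ^ j else 0)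
        = ∑ j ∈ Finset.range p, (if bits j then 2 ^ j else 0) :=
      Finset.sum_congr rfl fun j hj => by simp [b, (Finset.mem_range.1 hj).ne]
    rw [hsum, hbits, Int.toNat_of_nonneg hw.1]
    simp [b]

theorem zero_mem_Qset {n m : ℕ} (hn : 1 ≤ n) : (0 : ℝ) ∈ Qset n m :=
  (mem_Qset_iff hn).2 ⟨0, by simp, by positivity, by simp⟩

theorem Qset_subset_Qset {n n' m d : ℕ} (hn : 1 ≤ n) (h : n + d ≤ n') :
    Qset n m ⊆ Qset n' (m + d) := by
  intro x hx
  obtain ⟨z, hlo, hhi, rfl⟩ := (mem_Qset_iff hn).1 hx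
  have hpow : (2 : ℤ) ^ (n - 1) * 2 ^ d ≤ 2 ^ (n' - 1) := by
    rw [← pow_add]; exact pow_le_pow_right₀ one_le_two (by omega)
  have hd : (0 : ℤ) < 2 ^ d := by positivity
  refine (mem_Qset_iff (by omega)).2 ⟨z * 2 ^ d, by nlinarith, by nlinarith, ?_⟩
  push_cast
  rw [pow_add, mul_div_mul_right _ _ (by positivity)]

theorem add_mem_Qset {x y : ℝ} {n m : ℕ} (hn : 1 ≤ n) (hx : x ∈ Qset n m) (hy : y ∈ Qset n m) :
    x + y ∈ Qset (n + 1) m := by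
  obtain ⟨z, hzlo, hzhi, rfl⟩ := (mem_Qset_iff hn).1 hx
  obtain ⟨w, hwlo, hwhi, rfl⟩ := (mem_Qset_iff hn).1 hy
  have hpow : (2 : ℤ) ^ (n + 1 - 1) = 2 ^ (n - 1) + 2 ^ (n - 1) := by
    rw [← two_mul, ← pow_succ']; congr 1; omega
  exact (mem_Qset_iff (by omega)).2 ⟨z + w, by omega, by omega, by push_cast; ring⟩

theorem mul_mem_Qset {x y : ℝ} {n₁ n₂ m₁ m₂ : ℕ} (hn₁ : 1 ≤ n₁) (hn₂ : 1 ≤ n₂)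
    (hx : x ∈ Qset n₁ m₁) (hy : y ∈ Qset n₂ m₂) : x * y ∈ Qset (n₁ + n₂) (m₁ + m₂) := by
  obtain ⟨z, hzlo, hzhi, rfl⟩ := (mem_Qset_iff hn₁).1 hx
  obtain ⟨w, hwlo, hwhi, rfl⟩ := (mem_Qset_iff hn₂).1 hy
  have hpow : (2 : ℤ) ^ (n₁ + n₂ - 1) = 2 * (2 ^ (n₁ - 1) * 2 ^ (n₂ - 1)) := by
    rw [← pow_add, ← pow_succ']; congr 1; omega
  refine (mem_Qset_iff (by omega)).2 ⟨z * w, by nlinarith, by nlinarith, ?_⟩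
  push_cast
  rw [pow_add, div_mul_div_comm]

theorem sum_mem_Qset {ι : Type*} {s : Finset ι} {f : ι → ℝ} {n m : ℕ} (hn : 1 ≤ n)
    (hf : ∀ i ∈ s, f i ∈ Qset n m) : ∑ i ∈ s, f i ∈ Qset (n + s.card) m := by
  classical
  induction s using Finset.induction_on with
  | empty => simpa using zero_mem_Qset hn
  | insert a s ha ih =>
    rw [Finset.sum_insert ha, Finset.card_insert_of_notMem ha, ← add_assoc]
    have hfa : f a ∈ Qset (n + s.card) m := by
      simpa using Qset_subset_Qset (n' := n + s.card) (d := 0) hn (by omega)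
        (hf a (s.mem_insert_self a))
    exact add_mem_Qset (by omega) hfa (ih fun i hi => hf i (Finset.mem_insert_of_mem hi))

section Matrix

variable {ι κ η : Type*} [Fintype κ] [Fintype η]

theorem mulVec_mem_Qset {M : Matrix ι κ ℝ} {v : κ → ℝ} {n₁ n₂ m₁ m₂ : ℕ} (hn₁ : 1 ≤ n₁)
    (hn₂ : 1 ≤ n₂) (hM : ∀ i j, M i j ∈ Qset n₁ m₁) (hv : ∀ j, v j ∈ Qset n₂ m₂) (i : ι) :
    (M *ᵥ v) i ∈ Qset (n₁ + n₂ + Fintype.card κ) (m₁ + m₂) :=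
  sum_mem_Qset (by omega) fun j _ => mul_mem_Qset hn₁ hn₂ (hM i j) (hv j)

theorem mulVec_add_mulVec_mem_Qset {E : Matrix ι κ ℝ} {F : Matrix ι η ℝ} {x : κ → ℝ}
    {y : η → ℝ} {n m p d : ℕ} (hn : 1 ≤ n) (hp : 1 ≤ p)
    (hle : n + Fintype.card η + d ≤ p + Fintype.card κ)
    (hE : ∀ i j, E i j ∈ Qset n m) (hF : ∀ i j, F i j ∈ Qset n m)
    (hx : ∀ j, x j ∈ Qset p (m + d)) (hy : ∀ j, y j ∈ Qset n m) (i : ι) :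
    (E *ᵥ x + F *ᵥ y) i ∈ Qset (n + p + Fintype.card κ + 1) (m + m + d) := by
  have hEx := mulVec_mem_Qset hn hp hE hx i
  have hFy := Qset_subset_Qset (n' := n + p + Fintype.card κ) (d := d) (by omega) (by omega)
    (mulVec_mem_Qset hn hn hF hy i)
  rw [← add_assoc] at hEx
  exact add_mem_Qset (by omega) hEx hFy

end Matrix

section Phase

variable {ι : Type*} {nc ny n m : ℕ} {E : Matrix ι (Fin nc) ℝ} {F : Matrix ι (Fin ny) ℝ}
  {y : Fin ny → ℝ}

theorem mulVec_zero_add_mulVec_mem_Qset (hn : 1 ≤ n) (hF : ∀ i j, F i j ∈ Qset n m)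
    (hy : ∀ j, y j ∈ Qset n m) (i : ι) :
    (E *ᵥ 0 + F *ᵥ y) i ∈ Qset ((nc + 1) * 0 + ny + n * (0 + 2)) (m * (0 + 2)) := by
  rw [mulVec_zero, zero_add (F *ᵥ y), show m * (0 + 2) = m + m by ring,
    show (nc + 1) * 0 + ny + n * (0 + 2) = n + n + Fintype.card (Fin ny) by simp; ring]
  exact mulVec_mem_Qset hn hn hF hy i

theorem mulVec_add_mulVec_mem_Qset_succ {x : Fin nc → ℝ} {r : ℕ} (hmn : m < n)
    (hE : ∀ i j, E i j ∈ Qset n m) (hF : ∀ i j, F i j ∈ Qset n m)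
    (hx : ∀ j, x j ∈ Qset ((nc + 1) * r + ny + n * (r + 2)) (m * (r + 2)))
    (hy : ∀ j, y j ∈ Qset n m) (i : ι) :
    (E *ᵥ x + F *ᵥ y) i ∈
      Qset ((nc + 1) * (r + 1) + ny + n * (r + 1 + 2)) (m * (r + 1 + 2)) := by
  have hmr : m * (r + 1) ≤ n * (r + 1) := Nat.mul_le_mul_right _ hmn.le
  rw [show m * (r + 2) = m + m * (r + 1) by ring] at hx
  convert mulVec_add_mulVec_mem_Qset (d := m * (r + 1)) (by omega) (by nlinarith) ?_ hE hF hx hy i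
    using 2
  · simp only [Fintype.card_fin]; ring
  · ring
  · simp only [Fintype.card_fin]; nlinarith

end Phase

theorem resetFilter_output_mem_Qset {nc ny n m T : ℕ} (hmn : m < n)
    {A : Matrix (Fin nc) (Fin nc) ℝ} {B : Matrix (Fin nc) (Fin ny) ℝ}
    (hA : ∀ i j, A i j ∈ Qset n m) (hB : ∀ i j, B i j ∈ Qset n m)
    {ybar : ℕ → Fin ny → ℝ} (hy : ∀ k i, ybar k i ∈ Qset n m) {xc : ℕ → Fin nc → ℝ}
    (hxc0 : xc 0 = 0)
    (hxc : ∀ k : ℕ, xc (k + 1) = if (k + 1) % T ≠ 0 then A *ᵥ xc k + B *ᵥ ybar k else 0)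
    (k : ℕ) {p : ℕ} {E : Matrix (Fin p) (Fin nc) ℝ} {F : Matrix (Fin p) (Fin ny) ℝ}
    (hE : ∀ i j, E i j ∈ Qset n m) (hF : ∀ i j, F i j ∈ Qset n m) (i : Fin p) :
    (E *ᵥ xc k + F *ᵥ ybar k) i ∈
      Qset ((nc + 1) * (k % T) + ny + n * (k % T + 2)) (m * (k % T + 2)) := by
  induction k generalizing p with
  | zero => simpa [hxc0] using mulVec_zero_add_mulVec_mem_Qset (E := E) (by omega) hF (hy 0) i
  | succ k ih =>
    by_cases hk : (k + 1) % T = 0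
    · rw [hxc k, if_neg (not_not.2 hk), hk]
      exact mulVec_zero_add_mulVec_mem_Qset (by omega) hF (hy _) i
    · rw [hxc k, if_pos hk, Nat.add_one_mod_of_ne_zero hk]
      exact mulVec_add_mulVec_mem_Qset_succ hmn hE hF (ih hA hB) (hy _) i

theorem stmt16_general {nc ny nu : ℕ} (n m T : ℕ) (hmn : m < n)
    (Abar : Matrix (Fin nc) (Fin nc) ℝ) (Bbar : Matrix (Fin nc) (Fin ny) ℝ)
    (Cbar : Matrix (Fin nu) (Fin nc) ℝ) (Dbar : Matrix (Fin nu) (Fin ny) ℝ)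
    (hA : ∀ i j, Abar i j ∈ Qset n m) (hB : ∀ i j, Bbar i j ∈ Qset n m)
    (hC : ∀ i j, Cbar i j ∈ Qset n m) (hD : ∀ i j, Dbar i j ∈ Qset n m)
    (ybar : ℕ → Fin ny → ℝ) (hy : ∀ k i, ybar k i ∈ Qset n m)
    (xc : ℕ → Fin nc → ℝ) (u : ℕ → Fin nu → ℝ)
    (hxc0 : xc 0 = 0)
    (hxc : ∀ k : ℕ, xc (k + 1) =
      if (k + 1) % T ≠ 0 then Abar.mulVec (xc k) + Bbar.mulVec (ybar k) else 0)
    (hu : ∀ k : ℕ, u k = Cbar.mulVec (xc k) + Dbar.mulVec (ybar k)) :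
    (∀ k : ℕ, 1 ≤ k % T → ∀ i,
      xc k i ∈ Qset ((nc + 1) * (k % T - 1) + ny + n * (k % T + 1)) (m * (k % T + 1))) ∧
    (∀ k : ℕ, ∀ i,
      u k i ∈ Qset ((nc + 1) * (k % T) + ny + n * (k % T + 2)) (m * (k % T + 2))) := by
  refine ⟨fun k hk i => ?_,
    fun k i => hu k ▸ resetFilter_output_mem_Qset hmn hA hB hy hxc0 hxc k hC hD i⟩
  obtain ⟨j, rfl⟩ := Nat.exists_eq_add_one_of_ne_zero (by rintro rfl; simp at hk : k ≠ 0)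
  have hj : (j + 1) % T ≠ 0 := by omega
  rw [hxc j, if_pos hj, Nat.add_one_mod_of_ne_zero hj, Nat.add_sub_cancel]
  exact resetFilter_output_mem_Qset hmn hA hB hy hxc0 hxc j hA hB i

theorem stmt16 {nc ny nu : ℕ} (n m T : ℕ) (hm : 0 < m) (hmn : m < n) (hT : 1 ≤ T)
    (hny : ny ≤ nc)
    (Abar : Matrix (Fin nc) (Fin nc) ℝ) (Bbar : Matrix (Fin nc) (Fin ny) ℝ)
    (Cbar : Matrix (Fin nu) (Fin nc) ℝ) (Dbar : Matrix (Fin nu) (Fin ny) ℝ)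
    (hA : ∀ i j, Abar i j ∈ Qset n m) (hB : ∀ i j, Bbar i j ∈ Qset n m)
    (hC : ∀ i j, Cbar i j ∈ Qset n m) (hD : ∀ i j, Dbar i j ∈ Qset n m)
    (ybar : ℕ → Fin ny → ℝ) (hy : ∀ k i, ybar k i ∈ Qset n m)
    (xc : ℕ → Fin nc → ℝ) (u : ℕ → Fin nu → ℝ)
    (hxc0 : xc 0 = 0)
    (hxc : ∀ k : ℕ, xc (k + 1) =
      if (k + 1) % T ≠ 0 then Abar.mulVec (xc k) + Bbar.mulVec (ybar k) else 0)
    (hu : ∀ k : ℕ, u k = Cbar.mulVec (xc k) + Dbar.mulVec (ybar k)) :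
    (∀ k : ℕ, 1 ≤ k % T → ∀ i,
      xc k i ∈ Qset ((nc + 1) * (k % T - 1) + ny + n * (k % T + 1)) (m * (k % T + 1))) ∧
    (∀ k : ℕ, ∀ i,
      u k i ∈ Qset ((nc + 1) * (k % T) + ny + n * (k % T + 2)) (m * (k % T + 2))) :=
  stmt16_general n m T hmn Abar Bbar Cbar Dbar hA hB hC hD ybar hy xc u hxc0 hxc hu
end
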